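/- arXiv:1708.01272 — 5 statements merged into one kernel-verified Lean document; each statement's English description precedes it below -/
import Mathlib

section
/- Let W be a finite connected weighted graph with positive edge weights in which every edge {x, y} is tight, meaning the edge itself is the unique minimum-weight x-y walk. Then the adjacency graph of the weighted graph metric d_W equals the underlying graph of W. -/
/-- `d` is a metric on `X`. -/
def IsMetric {X : Type*} (d : X → X → ℝ) : Prop :=
  (∀ x y, d x y = 0 ↔ x = y) ∧ (∀ x y, d x y = d y x) ∧ ∀ x y z, d x z ≤ d x y + d y z

/-- Betweenness relation of the distance function `d`. -/
def btw {X : Type*} (d : X → X → ℝ) (x y z : X) : Prop :=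
  d x z = d x y + d y z

/-- The adjacency graph of a distance function `d` (symmetrized form; coincides with the
usual one when `d` is a metric): `x ~ z` iff no third point lies between them. -/
def adjGraphD {X : Type*} (d : X → X → ℝ) : SimpleGraph X where
  Adj x z := x ≠ z ∧ ∀ y, y ≠ x → y ≠ z → d x z ≠ d x y + d y z ∧ d z x ≠ d z y + d y x
  symm := ⟨by
    rintro x z ⟨hxz, h⟩
    exact ⟨hxz.symm, fun y hyz hyx => ⟨(h y hyx hyz).2, (h y hyx hyz).1⟩⟩⟩
  loopless := ⟨fun x h => h.1 rfl⟩

/-- Betweenness relation of the shortest-path metric of a graph `G`. -/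
def gBtw {V : Type*} (G : SimpleGraph V) (x y z : V) : Prop :=
  G.dist x z = G.dist x y + G.dist y z

/-- A walk is induced if the only edges of `G` between its vertices are its own edges. -/
def InducedWalk {V : Type*} (G : SimpleGraph V) {x y : V} (p : G.Walk x y) : Prop :=
  ∀ a ∈ p.support, ∀ b ∈ p.support, G.Adj a b → s(a, b) ∈ p.edges

/-- A block graph: connected, and every cycle induces a complete subgraph. -/
def IsBlockGraph {V : Type*} (G : SimpleGraph V) : Prop :=
  G.Connected ∧ ∀ (v : V) (p : G.Walk v v), p.IsCycle →
    ∀ x ∈ p.support, ∀ y ∈ p.support, x ≠ y → G.Adj x y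

/-- Distance-hereditary: every connected induced subgraph is isometric. -/
def DistHereditary {V : Type*} (G : SimpleGraph V) : Prop :=
  ∀ S : Set V, (G.induce S).Connected → ∀ u v : S, (G.induce S).dist u v = G.dist u v

/-- Total weight of a walk in a weighted graph. -/
def wt {V : Type*} {G : SimpleGraph V} (w : Sym2 V → ℝ) {x y : V} (p : G.Walk x y) : ℝ :=
  (p.edges.map w).sum

/-- Betweenness of points along a list (used for the ordered structure of a path). -/
def pathBtw {X : Type*} [DecidableEq X] (L : List X) (a b c : X) : Prop :=
  (L.idxOf a ≤ L.idxOf b ∧ L.idxOf b ≤ L.idxOf c) ∨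
  (L.idxOf c ≤ L.idxOf b ∧ L.idxOf b ≤ L.idxOf a)

/-!
A shortest `x`–`z` path through a third vertex `y` shows that `d x z = d x y + d y z` whenever
`x` and `z` are not adjacent. Conversely, if `d x z = d x y + d y z` for some `y ∉ {x, z}`, then
concatenating shortest paths `x → y → z` gives a walk of weight `d x z` with at least two edges.
Shortcutting it to a path only deletes edges, each of positive weight, and cannot go below
`d x z`, so no edge is deleted: the result is a minimum-weight `x`–`z` path of length at least
two, and the edge `{x, z}` (if present) is not tight.
-/

open List in
theorem List.Sublist.eq_of_sum_eq {M : Type*} [AddCommMonoid M] [PartialOrder M]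
    [IsOrderedCancelAddMonoid M] {l₁ l₂ : List M} (h : l₁ <+ l₂) (hpos : ∀ a ∈ l₂, 0 < a)
    (hsum : l₁.sum = l₂.sum) : l₁ = l₂ := by
  induction h with
  | slnil => rfl
  | cons a hsub _ =>
    simp only [List.sum_cons, List.forall_mem_cons] at hpos hsum
    have hle : _ ≤ _ := hsub.sum_le_sum fun b hb => (hpos.2 b hb).le
    exact absurd hsum (lt_add_of_pos_of_le hpos.1 hle).ne
  | cons_cons a _ ih =>
    simp only [List.sum_cons, List.forall_mem_cons, add_right_inj] at hpos hsum
    rw [ih hpos.2 hsum]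

section Weight

open SimpleGraph

variable {V : Type*} {G : SimpleGraph V} {w : Sym2 V → ℝ}

@[simp]
theorem wt_nil {u : V} : wt w (Walk.nil : G.Walk u u) = 0 := rfl

@[simp]
theorem wt_cons {u v x : V} (h : G.Adj u v) (p : G.Walk v x) :
    wt w (Walk.cons h p) = w s(u, v) + wt w p := by
  simp [wt]

@[simp]
theorem wt_append {u v x : V} (p : G.Walk u v) (q : G.Walk v x) :
    wt w (p.append q) = wt w p + wt w q := by
  simp [wt, Walk.edges_append]

theorem wt_bypass_le [DecidableEq V] (hw : ∀ e ∈ G.edgeSet, 0 < w e) {u v : V}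
    (p : G.Walk u v) : wt w p.bypass ≤ wt w p :=
  (p.edges_bypass_sublist_edges.map w).sum_le_sum fun _ hr => by
    obtain ⟨e, he, rfl⟩ := List.mem_map.mp hr
    exact (hw e (p.edges_subset_edgeSet he)).le

theorem length_bypass_eq_of_wt_bypass_eq [DecidableEq V] (hw : ∀ e ∈ G.edgeSet, 0 < w e)
    {u v : V} (p : G.Walk u v) (h : wt w p.bypass = wt w p) :
    p.bypass.length = p.length := by
  have hmap : p.bypass.edges.map w = p.edges.map w := by
    refine (p.edges_bypass_sublist_edges.map w).eq_of_sum_eq (fun _ hr => ?_) h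
    obtain ⟨e, he, rfl⟩ := List.mem_map.mp hr
    exact hw e (p.edges_subset_edgeSet he)
  simpa only [List.length_map, Walk.length_edges] using congrArg List.length hmap

end Weight

def IsWeightedDist {V : Type*} (G : SimpleGraph V) (w : Sym2 V → ℝ) (d : V → V → ℝ) : Prop :=
  ∀ u v : V, IsLeast {r : ℝ | ∃ p : G.Walk u v, p.IsPath ∧ wt w p = r} (d u v)

namespace IsWeightedDist

open SimpleGraph

variable {V : Type*} {G : SimpleGraph V} {w : Sym2 V → ℝ} {d : V → V → ℝ}

theorem le_wt (hw : ∀ e ∈ G.edgeSet, 0 < w e) (hd : IsWeightedDist G w d) {u v : V}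
    (p : G.Walk u v) : d u v ≤ wt w p := by
  classical
  exact ((hd u v).2 ⟨p.bypass, p.bypass_isPath, rfl⟩).trans (wt_bypass_le hw p)

theorem le_add (hw : ∀ e ∈ G.edgeSet, 0 < w e) (hd : IsWeightedDist G w d) (x y z : V) :
    d x z ≤ d x y + d y z := by
  obtain ⟨p, -, hp⟩ := (hd x y).1
  obtain ⟨q, -, hq⟩ := (hd y z).1
  simpa only [wt_append, hp, hq] using hd.le_wt hw (p.append q)

theorem not_btw_of_tight (hw : ∀ e ∈ G.edgeSet, 0 < w e) (hd : IsWeightedDist G w d)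
    {x y z : V} (htight : ∀ p : G.Walk x z, p.IsPath → wt w p = d x z → p.length = 1)
    (hyx : y ≠ x) (hyz : y ≠ z) : ¬btw d x y z := by
  classical
  intro hbtw
  obtain ⟨p, -, hp⟩ := (hd x y).1
  obtain ⟨q, -, hq⟩ := (hd y z).1
  set r := p.append q
  have hr : wt w r = d x z := by rw [wt_append, hp, hq, hbtw]
  have hbypass : wt w r.bypass = wt w r :=
    le_antisymm (wt_bypass_le hw r) (hr ▸ hd.le_wt hw r.bypass)
  have hlen : r.bypass.length = p.length + q.length := by
    rw [length_bypass_eq_of_wt_bypass_eq hw r hbypass, Walk.length_append]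
  have hp0 : p.length ≠ 0 := fun h => hyx (Walk.eq_of_length_eq_zero h).symm
  have hq0 : q.length ≠ 0 := fun h => hyz (Walk.eq_of_length_eq_zero h)
  have hone : r.bypass.length = 1 := htight r.bypass r.bypass_isPath (hbypass.trans hr)
  omega

theorem exists_btw_of_not_adj (hw : ∀ e ∈ G.edgeSet, 0 < w e) (hd : IsWeightedDist G w d)
    {x z : V} (hne : x ≠ z) (hadj : ¬G.Adj x z) : ∃ y, y ≠ x ∧ y ≠ z ∧ btw d x y z := by
  obtain ⟨p, -, hp⟩ := (hd x z).1
  cases p with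
  | nil => exact absurd rfl hne
  | @cons _ y _ h p =>
    refine ⟨y, h.ne', fun hyz => hadj (hyz ▸ h), le_antisymm (hd.le_add hw x y z) ?_⟩
    have hxy : d x y ≤ w s(x, y) := by
      simpa using hd.le_wt hw (Walk.cons h Walk.nil)
    have hyz : d y z ≤ wt w p := hd.le_wt hw p
    rw [← hp, wt_cons]
    linarith

end IsWeightedDist

theorem stmt_4_general {V : Type*} (G : SimpleGraph V)
    (w : Sym2 V → ℝ) (hw : ∀ e ∈ G.edgeSet, 0 < w e) (d : V → V → ℝ)
    (hd : ∀ u v : V, IsLeast {r : ℝ | ∃ p : G.Walk u v, p.IsPath ∧ wt w p = r} (d u v))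
    (htight : ∀ x y : V, G.Adj x y →
      ∀ p : G.Walk x y, p.IsPath → wt w p = d x y → p.length = 1) :
    adjGraphD d = G := by
  have hd : IsWeightedDist G w d := hd
  ext x z
  constructor
  · rintro ⟨hne, hmid⟩
    by_contra hadj
    obtain ⟨y, hyx, hyz, hbtw⟩ := hd.exists_btw_of_not_adj hw hne hadj
    exact (hmid y hyx hyz).1 hbtw
  · intro hadj
    exact ⟨hadj.ne, fun y hyx hyz =>
      ⟨hd.not_btw_of_tight hw (htight x z hadj) hyx hyz,
        hd.not_btw_of_tight hw (htight z x hadj.symm) hyz hyx⟩⟩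

/-- If every edge of a finite connected positively-weighted graph is tight, then the
adjacency graph of the weighted graph metric equals the underlying graph. -/
theorem stmt_4 {V : Type*} [Fintype V] (G : SimpleGraph V) (hG : G.Connected)
    (w : Sym2 V → ℝ) (hw : ∀ e ∈ G.edgeSet, 0 < w e) (d : V → V → ℝ)
    (hd : ∀ u v : V, IsLeast {r : ℝ | ∃ p : G.Walk u v, p.IsPath ∧ wt w p = r} (d u v))
    (htight : ∀ x y : V, G.Adj x y →
      ∀ p : G.Walk x y, p.IsPath → wt w p = d x y → p.length = 1) :
    adjGraphD d = G :=
  stmt_4_general G w hw d hd htight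
end

section
/- Let G be a finite connected graph and P an induced path in G that is not a geodesic. Then there exists a finite metric space M on the vertex set of G whose adjacency graph equals G, but whose betweenness relation neither contains nor is contained in the betweenness relation of the shortest-path metric of G. -/
/-!
Reweight `G`: the edges of `p` get weight `ε = 1 / (|p| + 1)`, all other edges weight `1`, and
let `d` be the resulting weighted path metric. Since `p` is induced and `ε |p| < 1`, each edge
is strictly lighter than every other walk between its ends, so the adjacency graph of `d` is
`G`; and `p` is a `d`-geodesic, of length `ε |p|`.

Every vertex of a geodesic lies between its ends, and this propagates along the geodesic. So if
`btw d ⊆ gBtw`, the `d`-geodesic `p` would be a `G`-geodesic. If `gBtw ⊆ btw d`, then for a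
`G`-geodesic `q` from `x` to `y` we would get `d x y = weight q`, which is `ε |q| < ε |p|` when
`q` runs inside `p` and at least `1 > ε |p|` otherwise.
-/
namespace SimpleGraph

variable {V : Type*} {G : SimpleGraph V}

namespace Walk

def weight (W : Sym2 V → ℝ) {u v : V} (q : G.Walk u v) : ℝ :=
  (q.edges.map W).sum

variable {W : Sym2 V → ℝ}

@[simp]
lemma weight_nil {u : V} : (nil : G.Walk u u).weight W = 0 := by
  simp [weight]

@[simp]
lemma weight_cons {u v w : V} (h : G.Adj u v) (q : G.Walk v w) :
    (cons h q).weight W = W s(u, v) + q.weight W := by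
  simp [weight]

@[simp]
lemma weight_append {u v w : V} (q : G.Walk u v) (r : G.Walk v w) :
    (q.append r).weight W = q.weight W + r.weight W := by
  simp [weight]

@[simp]
lemma weight_reverse {u v : V} (q : G.Walk u v) : q.reverse.weight W = q.weight W := by
  simp [weight, List.sum_reverse]

lemma weight_nonneg (hW : ∀ e, 0 ≤ W e) {u v : V} (q : G.Walk u v) : 0 ≤ q.weight W :=
  List.sum_nonneg <| by simpa using fun e _ => hW e

lemma weight_eq_mul_length {c : ℝ} {u v : V} (q : G.Walk u v) (hq : ∀ e ∈ q.edges, W e = c) :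
    q.weight W = c * q.length := by
  simp [weight, List.map_congr_left hq, ← length_edges, mul_comm]

lemma mul_length_le_weight {ε : ℝ} (hW : ∀ e, ε ≤ W e) {u v : V} (q : G.Walk u v) :
    ε * q.length ≤ q.weight W := by
  induction q with
  | nil => simp
  | @cons a b _ h q ih =>
    rw [weight_cons, length_cons]
    push_cast
    linarith [hW s(a, b)]

lemma add_mul_le_weight {ε : ℝ} (hW : ∀ e, ε ≤ W e) {u v : V} (q : G.Walk u v) {e : Sym2 V}
    (he : e ∈ q.edges) : W e + ε * (q.length - 1) ≤ q.weight W := by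
  induction q with
  | nil => simp at he
  | @cons a b _ h q ih =>
    rw [edges_cons, List.mem_cons] at he
    rw [weight_cons, length_cons]
    push_cast
    rcases he with rfl | he
    · linarith [q.mul_length_le_weight hW]
    · linarith [ih he, hW s(a, b)]

lemma weight_bypass_le [DecidableEq V] (hW : ∀ e, 0 ≤ W e) {u v : V} (q : G.Walk u v) :
    q.bypass.weight W ≤ q.weight W := by
  obtain ⟨l, hperm, hsub⟩ :=
    List.subperm_of_subset q.bypass_isPath.edges_nodup q.edges_bypass_subset_edges
  rw [weight, ← (hperm.map W).sum_eq]
  exact (hsub.map W).sum_le_sum (by simpa using fun e _ => hW e)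

lemma abs_sub_le_weight {f : V → ℝ} (hf : ∀ u v, G.Adj u v → |f u - f v| ≤ W s(u, v))
    {u v : V} (q : G.Walk u v) : |f u - f v| ≤ q.weight W := by
  induction q with
  | nil => simp
  | @cons a b c h q ih =>
    calc |f a - f c| ≤ |f a - f b| + |f b - f c| := abs_sub_le _ _ _
      _ ≤ W s(a, b) + q.weight W := add_le_add (hf a b h) ih
      _ = (cons h q).weight W := (weight_cons h q).symm

lemma mem_support_of_edges_subset {x y u v : V} {p : G.Walk x y} {q : G.Walk u v}
    (hq : q.edges ⊆ p.edges) (huv : u ≠ v) : u ∈ p.support := by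
  cases q with
  | nil => exact absurd rfl huv
  | cons h q => exact p.fst_mem_support_of_mem_edges (hq List.mem_cons_self)

lemma IsPath.support_idxOf_getVert [DecidableEq V] {u v : V} {p : G.Walk u v} (hp : p.IsPath)
    {i : ℕ} (hi : i ≤ p.length) : p.support.idxOf (p.getVert i) = i := by
  refine hp.getVert_injOn ?_ hi (p.getVert_support_idxOf (p.getVert_mem_support i))
  have := List.idxOf_lt_length_of_mem (p.getVert_mem_support i)
  rw [length_support] at this
  exact Nat.lt_succ_iff.mp this

end Walk

/-- For unreachable pairs this is the junk value `sInf ∅ = 0`. -/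
noncomputable def weightedDist (G : SimpleGraph V) (W : Sym2 V → ℝ) (a b : V) : ℝ :=
  ⨅ q : G.Walk a b, q.weight W

def EdgesUniquelyShortest (G : SimpleGraph V) (W : Sym2 V → ℝ) : Prop :=
  ∀ ⦃a b : V⦄, G.Adj a b → ∀ q : G.Walk a b, 2 ≤ q.length → W s(a, b) < q.weight W

section WeightedDist

variable {W : Sym2 V → ℝ} {a b c : V}

lemma weightedDist_le_weight (hW : ∀ e, 0 ≤ W e) (q : G.Walk a b) :
    G.weightedDist W a b ≤ q.weight W :=
  ciInf_le ⟨0, by rintro _ ⟨r, rfl⟩; exact r.weight_nonneg hW⟩ q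

lemma le_weightedDist (hab : G.Reachable a b) {r : ℝ} (h : ∀ q : G.Walk a b, r ≤ q.weight W) :
    r ≤ G.weightedDist W a b :=
  have : Nonempty (G.Walk a b) := hab
  le_ciInf h

lemma abs_sub_le_weightedDist (hab : G.Reachable a b) {f : V → ℝ}
    (hf : ∀ u v, G.Adj u v → |f u - f v| ≤ W s(u, v)) : |f a - f b| ≤ G.weightedDist W a b :=
  le_weightedDist hab fun q => q.abs_sub_le_weight hf

lemma weightedDist_comm : G.weightedDist W a b = G.weightedDist W b a :=
  Equiv.iInf_congr ⟨Walk.reverse, Walk.reverse, Walk.reverse_reverse, Walk.reverse_reverse⟩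
    Walk.weight_reverse

lemma weightedDist_self (hW : ∀ e, 0 ≤ W e) : G.weightedDist W a a = 0 :=
  le_antisymm (by simpa using weightedDist_le_weight hW (Walk.nil : G.Walk a a))
    (le_weightedDist Reachable.rfl (Walk.weight_nonneg hW))

variable [Finite V]

lemma exists_weight_eq_weightedDist (hW : ∀ e, 0 ≤ W e) (hab : G.Reachable a b) :
    ∃ q : G.Walk a b, q.weight W = G.weightedDist W a b := by
  classical
  have := Fintype.ofFinite V
  have : Nonempty (G.Path a b) := ⟨hab.some.toPath⟩
  obtain ⟨q, hq⟩ := exists_eq_ciInf_of_finite (f := fun q : G.Path a b => q.1.weight W)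
  refine ⟨q.1, le_antisymm ?_ (weightedDist_le_weight hW q.1)⟩
  refine le_weightedDist hab fun r => ?_
  calc q.1.weight W = ⨅ q : G.Path a b, q.1.weight W := hq
    _ ≤ r.bypass.weight W := ciInf_le (Set.finite_range _).bddBelow r.toPath
    _ ≤ r.weight W := r.weight_bypass_le hW

lemma weightedDist_triangle (hW : ∀ e, 0 ≤ W e) (hab : G.Reachable a b) (hbc : G.Reachable b c) :
    G.weightedDist W a c ≤ G.weightedDist W a b + G.weightedDist W b c := by
  obtain ⟨q, hq⟩ := exists_weight_eq_weightedDist hW hab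
  obtain ⟨r, hr⟩ := exists_weight_eq_weightedDist hW hbc
  simpa [← hq, ← hr] using weightedDist_le_weight hW (q.append r)

lemma weightedDist_pos (hW : ∀ e, 0 < W e) (hab : G.Reachable a b) (hne : a ≠ b) :
    0 < G.weightedDist W a b := by
  obtain ⟨q, hq⟩ := exists_weight_eq_weightedDist (fun e => (hW e).le) hab
  rw [← hq]
  cases q with
  | nil => exact absurd rfl hne
  | cons _ q =>
    rw [Walk.weight_cons]
    exact add_pos_of_pos_of_nonneg (hW _) (q.weight_nonneg fun e => (hW e).le)

lemma isMetric_weightedDist (hG : G.Connected) (hW : ∀ e, 0 < W e) :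
    IsMetric (G.weightedDist W) :=
  have hW₀ : ∀ e, 0 ≤ W e := fun e => (hW e).le
  ⟨fun a b => ⟨fun h => by_contra fun hne => (weightedDist_pos hW (hG a b) hne).ne' h,
      fun h => h ▸ weightedDist_self hW₀⟩,
    fun _ _ => weightedDist_comm,
    fun a b c => weightedDist_triangle hW₀ (hG a b) (hG b c)⟩

end WeightedDist

section EdgesUniquelyShortest

variable {W : Sym2 V → ℝ} {a b : V}

lemma weightedDist_eq_of_adj (hW : ∀ e, 0 ≤ W e) (hS : G.EdgesUniquelyShortest W)
    (hab : G.Adj a b) : G.weightedDist W a b = W s(a, b) := by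
  refine le_antisymm (by simpa using weightedDist_le_weight hW hab.toWalk) ?_
  refine le_weightedDist hab.reachable fun q => ?_
  rcases q with _ | ⟨_, _ | ⟨_, _⟩⟩
  · exact absurd rfl hab.ne
  · simp
  · exact (hS hab _ (by simp)).le

variable [Finite V]

lemma exists_btw_weightedDist_of_not_adj (hG : G.Connected) (hW : ∀ e, 0 ≤ W e) (hne : a ≠ b)
    (hab : ¬G.Adj a b) : ∃ m, m ≠ a ∧ m ≠ b ∧ btw (G.weightedDist W) a m b := by
  obtain ⟨q, hq⟩ := exists_weight_eq_weightedDist hW (hG a b)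
  cases q with
  | nil => exact absurd rfl hne
  | @cons _ m _ h q =>
    refine ⟨m, h.ne', fun hmb => hab (hmb ▸ h), le_antisymm
      (weightedDist_triangle hW (hG a m) (hG m b)) ?_⟩
    calc G.weightedDist W a m + G.weightedDist W m b ≤ W s(a, m) + q.weight W :=
          add_le_add (by simpa using weightedDist_le_weight hW h.toWalk)
            (weightedDist_le_weight hW q)
      _ = G.weightedDist W a b := by rw [← hq, Walk.weight_cons]

lemma weightedDist_lt_add_of_adj (hG : G.Connected) (hW : ∀ e, 0 ≤ W e)
    (hS : G.EdgesUniquelyShortest W) (hab : G.Adj a b) {m : V} (hma : m ≠ a) (hmb : m ≠ b) :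
    G.weightedDist W a b < G.weightedDist W a m + G.weightedDist W m b := by
  obtain ⟨q, hq⟩ := exists_weight_eq_weightedDist hW (hG a m)
  obtain ⟨r, hr⟩ := exists_weight_eq_weightedDist hW (hG m b)
  have hq₁ : q.length ≠ 0 := fun h => hma (Walk.eq_of_length_eq_zero h).symm
  have hr₁ : r.length ≠ 0 := fun h => hmb (Walk.eq_of_length_eq_zero h)
  rw [weightedDist_eq_of_adj hW hS hab, ← hq, ← hr, ← Walk.weight_append]
  exact hS hab _ (by rw [Walk.length_append]; omega)

lemma adjGraphD_weightedDist (hG : G.Connected) (hW : ∀ e, 0 ≤ W e)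
    (hS : G.EdgesUniquelyShortest W) : adjGraphD (G.weightedDist W) = G := by
  ext a b
  refine ⟨fun ⟨hne, hbtw⟩ => by_contra fun hab => ?_, fun hab => ⟨hab.ne, fun m hma hmb => ?_⟩⟩
  · obtain ⟨m, hma, hmb, hm⟩ := exists_btw_weightedDist_of_not_adj hG hW hne hab
    exact (hbtw m hma hmb).1 hm
  · have h₁ := weightedDist_lt_add_of_adj hG hW hS hab hma hmb
    have h₂ := weightedDist_lt_add_of_adj hG hW hS hab.symm hmb hma
    exact ⟨h₁.ne, h₂.ne⟩

end EdgesUniquelyShortest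

section Betweenness

variable {W : Sym2 V → ℝ}

lemma weight_eq_weightedDist_of_length_eq_dist (hG : G.Connected) (hW : ∀ e, 0 ≤ W e)
    (hE : ∀ u v, G.Adj u v → G.weightedDist W u v = W s(u, v))
    (hB : ∀ u v w, gBtw G u v w → btw (G.weightedDist W) u v w) {a b : V} (q : G.Walk a b)
    (hq : q.length = G.dist a b) : q.weight W = G.weightedDist W a b := by
  induction q with
  | nil => simp [weightedDist_self hW]
  | @cons a m b h q ih =>
    have hm : G.dist a m = 1 := dist_eq_one_iff_adj.mpr h
    have htri : G.dist a b ≤ G.dist a m + G.dist m b := hG.dist_triangle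
    have hle : G.dist m b ≤ q.length := dist_le q
    rw [Walk.length_cons] at hq
    have hq' : q.length = G.dist m b := by omega
    rw [Walk.weight_cons, ih hq', ← hE a m h, hB a m b (by rw [gBtw]; omega)]

variable [Finite V]

lemma length_eq_dist_of_weight_eq_weightedDist (hG : G.Connected) (hW : ∀ e, 0 ≤ W e)
    (hB : ∀ u v w, btw (G.weightedDist W) u v w → gBtw G u v w) {a b : V} (q : G.Walk a b)
    (hq : q.weight W = G.weightedDist W a b) : q.length = G.dist a b := by
  induction q with
  | nil => simp
  | @cons a m b h q ih =>
    have h₁ : G.weightedDist W a m ≤ W s(a, m) := by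
      simpa using weightedDist_le_weight hW h.toWalk
    have h₂ := weightedDist_le_weight hW q
    have h₃ := weightedDist_triangle hW (hG a m) (hG m b)
    rw [Walk.weight_cons] at hq
    have hbtw : gBtw G a m b := hB a m b (by show _ = _ + _; linarith)
    rw [gBtw, dist_eq_one_iff_adj.mpr h, ← ih (by linarith)] at hbtw
    rw [Walk.length_cons, hbtw, add_comm]

end Betweenness

namespace Walk

open Classical in
noncomputable def shortcutWeight {x y : V} (p : G.Walk x y) (ε : ℝ) (e : Sym2 V) : ℝ :=
  if e ∈ p.edges then ε else 1

section ShortcutWeight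

variable {x y : V} (p : G.Walk x y) {ε : ℝ} {e : Sym2 V}

@[simp]
lemma shortcutWeight_of_mem (he : e ∈ p.edges) : p.shortcutWeight ε e = ε := if_pos he

@[simp]
lemma shortcutWeight_of_notMem (he : e ∉ p.edges) : p.shortcutWeight ε e = 1 := if_neg he

lemma le_shortcutWeight (hε : ε ≤ 1) (e : Sym2 V) : ε ≤ p.shortcutWeight ε e := by
  by_cases he : e ∈ p.edges <;> simp [he, hε]

lemma shortcutWeight_pos (hε : 0 < ε) (e : Sym2 V) : 0 < p.shortcutWeight ε e := by
  by_cases he : e ∈ p.edges <;> simp [he, hε]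

lemma edgesUniquelyShortest_shortcutWeight (hind : InducedWalk G p) (hε : 0 < ε)
    (hε₁ : ε ≤ 1) : G.EdgesUniquelyShortest (p.shortcutWeight ε) := by
  intro a b hab q hq
  have hW := p.le_shortcutWeight hε₁
  have hlen : (2 : ℝ) ≤ q.length := by exact_mod_cast hq
  by_cases hab_p : s(a, b) ∈ p.edges
  · rw [shortcutWeight_of_mem p hab_p]
    nlinarith [q.mul_length_le_weight hW]
  · rw [shortcutWeight_of_notMem p hab_p]
    by_cases hsub : q.edges ⊆ p.edges
    · have ha := mem_support_of_edges_subset hsub hab.ne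
      have hb := mem_support_of_edges_subset (q := q.reverse) (by simpa using hsub) hab.ne'
      exact absurd (hind a ha b hb hab) hab_p
    · obtain ⟨e, heq, hep⟩ : ∃ e ∈ q.edges, e ∉ p.edges := by
        simpa [List.subset_def] using hsub
      have := q.add_mul_le_weight hW heq
      rw [shortcutWeight_of_notMem p hep] at this
      nlinarith

lemma abs_sub_idxOf_le_shortcutWeight [DecidableEq V] (hp : p.IsPath) (hε : 0 ≤ ε)
    (hεL : ε * (p.length + 1) ≤ 1) (u v : V) :
    |ε * p.support.idxOf u - ε * p.support.idxOf v| ≤ p.shortcutWeight ε s(u, v) := by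
  by_cases huv : s(u, v) ∈ p.edges
  · obtain ⟨i, hi, he⟩ := (p.mk_mem_edges_iff_exists).mp huv
    have hidx (j : ℕ) (hj : j ≤ p.length) := hp.support_idxOf_getVert hj
    rw [shortcutWeight_of_mem p huv]
    rcases Sym2.eq_iff.mp he with ⟨rfl, rfl⟩ | ⟨rfl, rfl⟩ <;>
      simp [hidx i hi.le, hidx (i + 1) hi, mul_add, abs_of_nonneg hε]
  · have hle (w : V) : (p.support.idxOf w : ℝ) ≤ p.length + 1 := by
      exact_mod_cast (length_support p ▸ List.idxOf_le_length)
    rw [shortcutWeight_of_notMem p huv, abs_le]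
    constructor <;> nlinarith [hle u, hle v, Nat.cast_nonneg (α := ℝ) (p.support.idxOf u),
      Nat.cast_nonneg (α := ℝ) (p.support.idxOf v)]

lemma weightedDist_shortcutWeight (hp : p.IsPath) (hε : 0 < ε) (hεL : ε * (p.length + 1) ≤ 1) :
    G.weightedDist (p.shortcutWeight ε) x y = ε * p.length := by
  classical
  refine le_antisymm ?_ ?_
  · calc G.weightedDist (p.shortcutWeight ε) x y ≤ p.weight (p.shortcutWeight ε) :=
          weightedDist_le_weight (fun e => (p.shortcutWeight_pos hε e).le) p
      _ = ε * p.length := p.weight_eq_mul_length fun e he => shortcutWeight_of_mem p he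
  · -- the position along `p`, scaled by `ε`, is `1`-Lipschitz for the weights
    have := abs_sub_le_weightedDist ⟨p⟩ (f := fun v => ε * p.support.idxOf v)
      fun u v _ => p.abs_sub_idxOf_le_shortcutWeight hp hε.le hεL u v
    have hx : p.support.idxOf x = 0 := by simpa using hp.support_idxOf_getVert (Nat.zero_le _)
    have hy : p.support.idxOf y = p.length := by simpa using hp.support_idxOf_getVert le_rfl
    simpa [hx, hy, abs_of_nonneg hε.le] using this

lemma length_eq_of_weight_shortcutWeight_eq (hε : 0 < ε) (hεL : ε * (p.length + 1) ≤ 1)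
    {a b : V} (q : G.Walk a b) (hq : q.weight (p.shortcutWeight ε) = ε * p.length) :
    q.length = p.length := by
  by_cases hsub : q.edges ⊆ p.edges
  · rw [q.weight_eq_mul_length fun e he => shortcutWeight_of_mem p (hsub he)] at hq
    exact_mod_cast mul_left_cancel₀ hε.ne' hq
  · obtain ⟨e, heq, hep⟩ : ∃ e ∈ q.edges, e ∉ p.edges := by
      simpa [List.subset_def] using hsub
    have hweight := q.add_mul_le_weight (p.le_shortcutWeight (ε := ε) (by nlinarith)) heq
    have hlen : (1 : ℝ) ≤ q.length := by
      exact_mod_cast length_edges q ▸ List.length_pos_of_mem heq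
    rw [shortcutWeight_of_notMem p hep] at hweight
    nlinarith

end ShortcutWeight

end Walk

end SimpleGraph

/-- If a finite connected graph has an induced path that is not a geodesic, then it has
a metric representation whose betweenness relation neither contains nor is contained in
that of the shortest-path metric. -/
theorem stmt_11 {V : Type*} [Fintype V] (G : SimpleGraph V) (hG : G.Connected)
    (x y : V) (p : G.Walk x y) (hp : p.IsPath) (hind : InducedWalk G p)
    (hng : p.length ≠ G.dist x y) :
    ∃ d : V → V → ℝ, IsMetric d ∧ adjGraphD d = G ∧
      (¬∀ a b c : V, gBtw G a b c → btw d a b c) ∧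
      (¬∀ a b c : V, btw d a b c → gBtw G a b c) := by
  set ε : ℝ := 1 / (p.length + 1)
  have hε : 0 < ε := by positivity
  have hεL : ε * (p.length + 1) = 1 := one_div_mul_cancel (by positivity)
  have hε₁ : ε ≤ 1 := by nlinarith [Nat.cast_nonneg (α := ℝ) p.length]
  set W := p.shortcutWeight ε
  have hW₀ : ∀ e, 0 ≤ W e := fun e => (p.shortcutWeight_pos hε e).le
  have hS := p.edgesUniquelyShortest_shortcutWeight hind hε hε₁
  have hxy := p.weightedDist_shortcutWeight hp hε hεL.le
  refine ⟨G.weightedDist W, SimpleGraph.isMetric_weightedDist hG (p.shortcutWeight_pos hε),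
    SimpleGraph.adjGraphD_weightedDist hG hW₀ hS, fun hB => ?_, fun hB => ?_⟩
  · obtain ⟨q, hq⟩ := hG.exists_walk_length_eq_dist x y
    have := SimpleGraph.weight_eq_weightedDist_of_length_eq_dist hG hW₀
      (fun u v => SimpleGraph.weightedDist_eq_of_adj hW₀ hS) hB q hq
    exact hng (hq ▸ (p.length_eq_of_weight_shortcutWeight_eq hε hεL.le q (this.trans hxy)).symm)
  · exact hng (SimpleGraph.length_eq_dist_of_weight_eq_weightedDist hG hW₀ hB p
      ((p.weight_eq_mul_length fun e he => p.shortcutWeight_of_mem he).trans hxy.symm))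
end

section
/- If G is a finite connected block graph, then G is uniquely representable: every finite metric space M on the vertex set of G whose adjacency graph equals G has the same betweenness relation as the shortest-path metric of G. -/
/-!
Let `d` be a metric on the vertices of `G` whose adjacency graph is `G`. Splitting `x, z` at a point
strictly between them, and recursing (the set of points between the endpoints shrinks), yields a
walk of `G` along which `d` is additive; such a `d`-geodesic walk is an induced path of `G`.
In a block graph induced paths are unique: two different ones would close into a cycle, hence a
clique, giving a chord. Shortest paths are induced, so the `d`-geodesic from `x` to `z` is the
unique graph geodesic, and for both metrics `y` lies between `x` and `z` iff `y` lies on it.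
-/

open SimpleGraph Walk

namespace IsMetric

variable {X : Type*} {d : X → X → ℝ}

lemma symm (hm : IsMetric d) (x y : X) : d x y = d y x := hm.2.1 x y

lemma triangle (hm : IsMetric d) (x y z : X) : d x z ≤ d x y + d y z := hm.2.2 x y z

lemma self_eq_zero (hm : IsMetric d) (x : X) : d x x = 0 := (hm.1 x x).2 rfl

lemma eq_of_eq_zero (hm : IsMetric d) {x y : X} (h : d x y = 0) : x = y := (hm.1 x y).1 h

lemma nonneg (hm : IsMetric d) (x y : X) : 0 ≤ d x y := by
  have := hm.triangle x y x
  rw [hm.self_eq_zero, hm.symm y x] at this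
  linarith

lemma btw_subset_left (hm : IsMetric d) {x y z : X} (h : btw d x y z) :
    {w | btw d x w y} ⊆ {w | btw d x w z} := by
  intro w (hw : d x y = d x w + d w y)
  have := hm.triangle x w z
  have := hm.triangle w y z
  show d x z = d x w + d w z
  unfold _root_.btw at h
  linarith

lemma btw_subset_right (hm : IsMetric d) {x y z : X} (h : btw d x y z) :
    {w | btw d y w z} ⊆ {w | btw d x w z} := by
  intro w (hw : d y z = d y w + d w z)
  have := hm.triangle x w z
  have := hm.triangle x y w
  show d x z = d x w + d w z
  unfold _root_.btw at h
  linarith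

lemma btw_tail (hm : IsMetric d) {x u y z : X} (hu : btw d x u y) (hy : btw d x y z) :
    btw d u y z := by
  have := hm.triangle x u z
  have := hm.triangle u y z
  unfold _root_.btw at *
  linarith

lemma not_btw_right (hm : IsMetric d) {x y z : X} (h : btw d x y z) (hyz : y ≠ z) :
    ¬btw d x z y := by
  intro h'
  unfold _root_.btw at h h'
  have := hm.nonneg y z
  have := hm.nonneg z y
  exact hyz (hm.eq_of_eq_zero (by linarith))

lemma not_btw_left (hm : IsMetric d) {x y z : X} (h : btw d x y z) (hxy : x ≠ y) :
    ¬btw d y x z := by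
  intro h'
  unfold _root_.btw at h h'
  have := hm.nonneg x y
  have := hm.nonneg y x
  exact hxy (hm.eq_of_eq_zero (by linarith))

lemma exists_btw_of_not_adj (hm : IsMetric d) {x z : X} (hxz : x ≠ z)
    (h : ¬(adjGraphD d).Adj x z) : ∃ y, y ≠ x ∧ y ≠ z ∧ btw d x y z := by
  simp only [adjGraphD, ne_eq, hxz, not_false_eq_true, true_and, not_forall, not_and_or,
    not_not] at h
  obtain ⟨y, hyx, hyz, hy | hy⟩ := h
  · exact ⟨y, hyx, hyz, hy⟩
  · refine ⟨y, hyx, hyz, ?_⟩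
    unfold _root_.btw
    rw [hm.symm x z, hy, hm.symm z y, hm.symm y x]
    ring

end IsMetric

namespace InducedWalk

variable {V : Type*} {G : SimpleGraph V}

lemma cons {x y z : V} (h : G.Adj x y) {p : G.Walk y z} (hp : InducedWalk G p)
    (hy : ∀ w ∈ p.support, G.Adj x w → w = y) : InducedWalk G (Walk.cons h p) := by
  have hx : ∀ w ∈ p.support, G.Adj x w → s(x, w) ∈ (Walk.cons h p).edges := by
    intro w hw hxw
    rw [hy w hw hxw, edges_cons]
    exact List.mem_cons_self
  intro a ha b hb hab
  rw [support_cons, List.mem_cons] at ha hb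
  rcases ha with rfl | ha <;> rcases hb with rfl | hb
  · exact absurd rfl hab.ne
  · exact hx b hb hab
  · exact Sym2.eq_swap ▸ hx a ha hab.symm
  · exact List.mem_cons_of_mem _ (hp a ha b hb hab)

lemma of_cons {x y z : V} {h : G.Adj x y} {p : G.Walk y z} (hi : InducedWalk G (Walk.cons h p))
    (hx : x ∉ p.support) : InducedWalk G p ∧ ∀ w ∈ p.support, G.Adj x w → w = y := by
  constructor
  · intro a ha b hb hab
    rcases List.mem_cons.1 (hi a (List.mem_cons_of_mem _ ha) b (List.mem_cons_of_mem _ hb) hab)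
      with he | he
    · rcases Sym2.eq_iff.1 he with ⟨rfl, -⟩ | ⟨-, rfl⟩
      · exact absurd ha hx
      · exact absurd hb hx
    · exact he
  · intro w hw hxw
    rcases List.mem_cons.1 (hi x (start_mem_support _) w (List.mem_cons_of_mem _ hw) hxw)
      with he | he
    · exact Sym2.congr_right.1 he
    · exact absurd (p.fst_mem_support_of_mem_edges he) hx

lemma of_length_eq_dist {x z : V} {p : G.Walk x z} (hp : p.length = G.dist x z) :
    InducedWalk G p := by
  classical
  induction p with
  | nil =>
    intro a ha b hb hab
    rw [support_nil, List.mem_singleton] at ha hb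
    exact absurd (ha.trans hb.symm) hab.ne
  | @cons x y z h q ih =>
    refine (ih (length_eq_dist_of_subwalk hp (isSubwalk_cons q h))).cons h
      fun w hw hxw => by_contra fun hwy => ?_
    have hshort := dist_le (Walk.cons hxw (q.dropUntil w hw))
    have hdrop := length_dropUntil_lt_length hw hwy
    rw [length_cons] at hp hshort
    omega

end InducedWalk

namespace SimpleGraph.Walk

variable {V : Type*} {G : SimpleGraph V}

/-- Each vertex lies `d`-between its predecessor and every later vertex; by induction, `d` is
then additive along the whole walk. -/
def IsMetricGeodesic (d : V → V → ℝ) : ∀ {x z : V}, G.Walk x z → Prop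
  | _, _, nil => True
  | _, _, cons (u := x) (v := y) _ q => q.IsMetricGeodesic d ∧ ∀ v ∈ q.support, btw d x y v

variable {d : V → V → ℝ}

namespace IsMetricGeodesic

lemma btw_of_mem_support (hm : IsMetric d) {x z : V} {p : G.Walk x z}
    (hp : p.IsMetricGeodesic d) {v : V} (hv : v ∈ p.support) : btw d x v z := by
  induction p with
  | nil =>
    rw [support_nil, List.mem_singleton] at hv
    subst hv
    simp [_root_.btw, hm.self_eq_zero]
  | @cons x y z h q ih =>
    obtain ⟨hq, hy⟩ := hp
    rw [support_cons, List.mem_cons] at hv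
    rcases hv with rfl | hv
    · simp [_root_.btw, hm.self_eq_zero]
    · have hxyz := hy z q.end_mem_support
      have hyvz := ih hq hv
      have hxyv := hy v hv
      unfold _root_.btw at *
      linarith

lemma isPath (hm : IsMetric d) {x z : V} {p : G.Walk x z} (hp : p.IsMetricGeodesic d) :
    p.IsPath := by
  induction p with
  | nil => exact IsPath.nil
  | @cons x y z h q ih =>
    obtain ⟨hq, hy⟩ := hp
    refine (ih hq).cons fun hx => h.ne ?_
    have := hy x hx
    unfold _root_.btw at this
    rw [hm.self_eq_zero, hm.symm y x] at this
    exact hm.eq_of_eq_zero (by linarith [hm.nonneg x y])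

lemma append (hm : IsMetric d) {x y z : V} {p : G.Walk x y} {q : G.Walk y z}
    (hp : p.IsMetricGeodesic d) (hq : q.IsMetricGeodesic d) (h : btw d x y z) :
    (p.append q).IsMetricGeodesic d := by
  induction p with
  | nil => simpa using hq
  | @cons x u y h p ih =>
    obtain ⟨hp, hu⟩ := hp
    refine ⟨ih hp hq (hm.btw_tail (hu y p.end_mem_support) h), fun v hv => ?_⟩
    rcases (mem_support_append_iff p q).1 hv with hv | hv
    · exact hu v hv
    · have hxuy := hu y p.end_mem_support
      have hyvz := hq.btw_of_mem_support hm hv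
      have := hm.triangle x u v
      have := hm.triangle u y v
      have := hm.triangle x v z
      unfold _root_.btw at *
      linarith

lemma inducedWalk (hG : G ≤ adjGraphD d) {x z : V} {p : G.Walk x z}
    (hp : p.IsMetricGeodesic d) : InducedWalk G p := by
  induction p with
  | nil =>
    intro a ha b hb hab
    rw [support_nil, List.mem_singleton] at ha hb
    exact absurd (ha.trans hb.symm) hab.ne
  | @cons x y z h q ih =>
    obtain ⟨hq, hy⟩ := hp
    refine (ih hq).cons h fun w hw hxw => by_contra fun hwy => ?_
    exact ((hG hxw).2 y h.ne.symm (Ne.symm hwy)).1 (hy w hw)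

end IsMetricGeodesic

theorem exists_isMetricGeodesic [Finite V] (hm : IsMetric d) (hG : adjGraphD d ≤ G)
    (x z : V) : ∃ p : G.Walk x z, p.IsMetricGeodesic d := by
  induction hn : {w | btw d x w z}.ncard using Nat.strong_induction_on generalizing x z with
  | _ n ih =>
  by_cases hxz : x = z
  · subst hxz
    exact ⟨nil, trivial⟩
  by_cases hadj : (adjGraphD d).Adj x z
  · refine ⟨cons (hG hadj) nil, trivial, fun v hv => ?_⟩
    rw [support_nil, List.mem_singleton] at hv
    subst hv
    simp [_root_.btw, hm.self_eq_zero]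
  obtain ⟨y, hyx, hyz, hy⟩ := hm.exists_btw_of_not_adj hxz hadj
  have hz : btw d x z z := by simp [_root_.btw, hm.self_eq_zero]
  have hx : btw d x x z := by simp [_root_.btw, hm.self_eq_zero]
  have hlt_left : {w | btw d x w y}.ncard < n := hn ▸ Set.ncard_lt_ncard
    ((Set.ssubset_iff_of_subset (hm.btw_subset_left hy)).2 ⟨z, hz, hm.not_btw_right hy hyz⟩)
    (Set.toFinite _)
  have hlt_right : {w | btw d y w z}.ncard < n := hn ▸ Set.ncard_lt_ncard
    ((Set.ssubset_iff_of_subset (hm.btw_subset_right hy)).2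
      ⟨x, hx, hm.not_btw_left hy (Ne.symm hyx)⟩)
    (Set.toFinite _)
  obtain ⟨p, hp⟩ := ih _ hlt_left x y rfl
  obtain ⟨q, hq⟩ := ih _ hlt_right y z rfl
  exact ⟨p.append q, hp.append hm hq hy⟩

end SimpleGraph.Walk

namespace IsBlockGraph

variable {V : Type*} {G : SimpleGraph V}

lemma eq_of_inducedWalk (hG : IsBlockGraph G) {x z : V} {p q : G.Walk x z} (hp : p.IsPath)
    (hpi : InducedWalk G p) (hq : q.IsPath) (hqi : InducedWalk G q) : p = q := by
  classical
  induction p with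
  | nil => exact (eq_nil_iff_nil.2 (isPath_iff_nil.1 hq)).symm
  | @cons x y z h p ih =>
    cases q with
    | nil => exact absurd p.end_mem_support ((cons_isPath_iff h p).1 hp).2
    | @cons _ y' _ h' q =>
      have hxp := ((cons_isPath_iff h p).1 hp).2
      have hxq := ((cons_isPath_iff h' q).1 hq).2
      obtain ⟨hpi, hpy⟩ := hpi.of_cons hxp
      obtain ⟨hqi, hqy⟩ := hqi.of_cons hxq
      by_cases hyy : y = y'
      · subst hyy
        rw [ih hp.of_cons hpi hq.of_cons hqi]
      exfalso
      have hyq : y ∉ q.support := fun hy => hyy (hqy y hy h)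
      -- close `x → y ⋯ y' → x` into a cycle through `x`, using `p` and `q` backwards
      set r := (p.append q.reverse).bypass
      have hxr : x ∉ r.support := fun hx => by
        rcases (mem_support_append_iff _ _).1 (support_bypass_subset_support _ hx) with hx | hx
        · exact hxp hx
        · exact hxq (by simpa using hx)
      have hC : (cons h' (cons h r).reverse).IsCycle := by
        refine (cons_isCycle_iff _ h').2 ⟨((bypass_isPath _).cons hxr).reverse, fun he => ?_⟩
        rw [edges_reverse, List.mem_reverse, edges_cons, List.mem_cons] at he
        rcases he with he | he
        · exact hyy (Sym2.congr_right.1 he).symm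
        · exact hxr (r.fst_mem_support_of_mem_edges he)
      have hr : ¬r.Nil := not_nil_of_ne hyy
      -- `r` leaves `y` along `p`, and the cycle makes that next vertex adjacent to `x`
      have hyr : s(y, r.snd) ∈ p.edges := by
        rcases List.mem_append.1 (edges_append _ _ ▸ edges_bypass_subset_edges _
          (mk_start_snd_mem_edges hr)) with he | he
        · exact he
        · exact absurd (by simpa using (q.reverse.fst_mem_support_of_mem_edges he)) hyq
      have hsnd : r.snd ∈ p.support := p.snd_mem_support_of_mem_edges hyr
      have hadj : G.Adj x r.snd := hG.2 x _ hC x (start_mem_support _) r.snd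
        (by simp [getVert_mem_support]) (fun hx => hxp (hx ▸ hsnd))
      exact (r.adj_snd hr).ne (hpy _ hsnd hadj).symm

lemma length_eq_dist_of_inducedWalk (hG : IsBlockGraph G) {x z : V} {p : G.Walk x z}
    (hp : p.IsPath) (hpi : InducedWalk G p) : p.length = G.dist x z := by
  obtain ⟨q, hq, hql⟩ := p.reachable.exists_path_of_dist
  rwa [hG.eq_of_inducedWalk hp hpi hq (.of_length_eq_dist hql)]

end IsBlockGraph

/-- Every finite connected block graph is uniquely representable. -/
theorem stmt_13 {V : Type*} [Fintype V] (G : SimpleGraph V) (hG : IsBlockGraph G) :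
    ∀ d : V → V → ℝ, IsMetric d → adjGraphD d = G →
      ∀ a b c : V, btw d a b c ↔ gBtw G a b c := by
  intro d hm hA a b c
  have length_eq_dist {x z : V} {p : G.Walk x z} (hp : p.IsMetricGeodesic d) :
      p.length = G.dist x z :=
    hG.length_eq_dist_of_inducedWalk (hp.isPath hm) (hp.inducedWalk hA.ge)
  constructor
  · intro habc
    obtain ⟨p, hp⟩ := exists_isMetricGeodesic hm hA.le a b
    obtain ⟨q, hq⟩ := exists_isMetricGeodesic hm hA.le b c
    have hpq := length_eq_dist (hp.append hm hq habc)
    rw [length_append, length_eq_dist hp, length_eq_dist hq] at hpq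
    exact hpq.symm
  · intro habc
    obtain ⟨p, -, hpl⟩ := hG.1.exists_path_of_dist a b
    obtain ⟨q, -, hql⟩ := hG.1.exists_path_of_dist b c
    have hpq : (p.append q).length = G.dist a c := by
      rw [length_append, hpl, hql]
      exact habc.symm
    obtain ⟨r, hr⟩ := exists_isMetricGeodesic hm hA.le a c
    have hpqr : p.append q = r := hG.eq_of_inducedWalk (isPath_of_length_eq_dist _ hpq)
      (.of_length_eq_dist hpq) (hr.isPath hm) (hr.inducedWalk hA.ge)
    exact hr.btw_of_mem_support hm
      (hpqr ▸ (mem_support_append_iff p q).2 (.inl p.end_mem_support))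
end

section
/- Let M = (X, d) be a finite metric space and let Y ⊆ X be a maximal subset on which the restriction of M is an ordered metric space (isometrically embeddable into the real line respecting betweenness). Then the subgraph of the adjacency graph of M induced by Y is an induced path whose restricted betweenness structure is ordered (i.e., a geodesic of the betweenness structure). -/
/-!
Enumerate `Y` as `f 0, …, f n` with the polygon equality. Splitting the polygon sum and
applying the triangle inequality to each piece shows that `f j` lies between `f i` and `f k`
whenever `i ≤ j ≤ k`, and, by injectivity, only then. Consecutive points are adjacent: a point
strictly between `f i` and `f (i + 1)` lies outside `Y`, so inserting it into the enumeration keeps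
the polygon equality and contradicts maximality. The walk `f 0, …, f n` is therefore an induced
path (a chord `f a f b` with `a + 1 < b` would have `f (a + 1)` between its ends) whose
betweenness is the order of indices.
-/

/-- Metric betweenness: `y` lies between `x` and `z`. -/
def MBtw {X : Type*} [MetricSpace X] (x y z : X) : Prop :=
  dist x z = dist x y + dist y z

/-- The adjacency graph of a metric space: `x ~ z` iff no third point lies between them. -/
def adjGraphM (X : Type*) [MetricSpace X] : SimpleGraph X where
  Adj x z := x ≠ z ∧ ∀ y, y ≠ x → y ≠ z → dist x z ≠ dist x y + dist y z
  symm := ⟨by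
    rintro x z ⟨hxz, h⟩
    refine ⟨hxz.symm, fun y hyz hyx => ?_⟩
    rw [dist_comm z x, dist_comm z y, dist_comm y x]
    intro he
    exact h y hyx hyz (by linarith)⟩
  loopless := ⟨fun x h => h.1 rfl⟩

/-- A geodesic of the betweenness structure of a metric space: an induced path in the
adjacency graph on whose vertex set the betweenness relation of the space coincides
with that of the path. -/
def IsBGeodesic {X : Type*} [MetricSpace X] [DecidableEq X] {x z : X}
    (p : (adjGraphM X).Walk x z) : Prop :=
  p.IsPath ∧ (∀ a ∈ p.support, ∀ b ∈ p.support, (adjGraphM X).Adj a b → s(a, b) ∈ p.edges) ∧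
    ∀ a ∈ p.support, ∀ b ∈ p.support, ∀ c ∈ p.support,
      (MBtw a b c ↔ pathBtw p.support a b c)

/-- $Y ⊆ X$ is an ordered subset: it can be enumerated so that the Polygon Equality holds. -/
def OrderedSet {X : Type*} [MetricSpace X] (Y : Set X) : Prop :=
  ∃ (n : ℕ) (y : Fin (n + 1) → X), Function.Injective y ∧ Set.range y = Y ∧
    dist (y 0) (y (Fin.last n)) = ∑ i : Fin n, dist (y i.castSucc) (y i.succ)

open Finset

section InsertAt

variable {α : Type*}

def insertAt (f : ℕ → α) (i : ℕ) (w : α) (t : ℕ) : α :=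
  if t ≤ i then f t else if t = i + 1 then w else f (t - 1)

variable {f : ℕ → α} {i : ℕ} {w : α}

theorem insertAt_of_le {t : ℕ} (ht : t ≤ i) : insertAt f i w t = f t :=
  if_pos ht

theorem insertAt_self_add_one : insertAt f i w (i + 1) = w := by
  simp [insertAt]

theorem insertAt_add_one_of_lt {t : ℕ} (ht : i < t) : insertAt f i w (t + 1) = f t := by
  simp [insertAt, show ¬t + 1 ≤ i by omega, show t ≠ i by omega]

theorem image_insertAt (f : ℕ → α) {i n : ℕ} (hi : i ≤ n) (w : α) :
    insertAt f i w '' Set.Iic (n + 1) = insert w (f '' Set.Iic n) := by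
  ext x
  simp only [Set.mem_image, Set.mem_insert_iff, Set.mem_Iic]
  constructor
  · rintro ⟨t, ht, rfl⟩
    unfold insertAt
    split_ifs
    · exact Or.inr ⟨t, by omega, rfl⟩
    · exact Or.inl rfl
    · exact Or.inr ⟨t - 1, by omega, rfl⟩
  · rintro (rfl | ⟨s, hs, rfl⟩)
    · exact ⟨i + 1, by omega, insertAt_self_add_one⟩
    · rcases le_or_gt s i with hsi | hsi
      · exact ⟨s, by omega, insertAt_of_le hsi⟩
      · exact ⟨s + 1, by omega, insertAt_add_one_of_lt hsi⟩

theorem injOn_insertAt {n : ℕ} (hf : Set.InjOn f (Set.Iic n)) (hi : i ≤ n)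
    (hw : w ∉ f '' Set.Iic n) : Set.InjOn (insertAt f i w) (Set.Iic (n + 1)) := by
  rw [← Set.ncard_image_iff (Set.finite_Iic _), image_insertAt f hi,
    Set.ncard_insert_of_notMem hw ((Set.finite_Iic n).image f), hf.ncard_image]
  simp

end InsertAt

section PseudoMetricSpace

variable {X : Type*} [PseudoMetricSpace X]

def IsStraightChain (f : ℕ → X) (n : ℕ) : Prop :=
  dist (f 0) (f n) = ∑ t ∈ range n, dist (f t) (f (t + 1))

variable {f : ℕ → X} {n : ℕ}

namespace IsStraightChain

theorem dist_eq_sum_Ico (h : IsStraightChain f n) {a b : ℕ} (hab : a ≤ b) (hbn : b ≤ n) :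
    dist (f a) (f b) = ∑ t ∈ Ico a b, dist (f t) (f (t + 1)) := by
  have h₁ := dist_le_Ico_sum_dist f (Nat.zero_le a)
  have h₂ := dist_le_Ico_sum_dist f hab
  have h₃ := dist_le_Ico_sum_dist f hbn
  have h₄ := dist_triangle4 (f 0) (f a) (f b) (f n)
  rw [IsStraightChain, range_eq_Ico, ← sum_Ico_consecutive _ (Nat.zero_le a) (hab.trans hbn),
    ← sum_Ico_consecutive _ hab hbn] at h
  linarith

theorem dist_add_dist (h : IsStraightChain f n) {i j k : ℕ} (hij : i ≤ j) (hjk : j ≤ k)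
    (hkn : k ≤ n) : dist (f i) (f j) + dist (f j) (f k) = dist (f i) (f k) := by
  rw [h.dist_eq_sum_Ico hij (hjk.trans hkn), h.dist_eq_sum_Ico hjk hkn,
    h.dist_eq_sum_Ico (hij.trans hjk) hkn, sum_Ico_consecutive _ hij hjk]

end IsStraightChain

theorem sum_range_insertAt (f : ℕ → X) (i : ℕ) (w : X) (m : ℕ) :
    ∑ t ∈ range (i + 1 + m + 1), dist (insertAt f i w t) (insertAt f i w (t + 1)) =
      ∑ t ∈ range (i + 1 + m), dist (f t) (f (t + 1)) +
        (dist (f i) w + dist w (f (i + 1)) - dist (f i) (f (i + 1))) := by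
  induction m with
  | zero =>
    have hprefix : ∑ t ∈ range i, dist (insertAt f i w t) (insertAt f i w (t + 1)) =
        ∑ t ∈ range i, dist (f t) (f (t + 1)) :=
      sum_congr rfl fun t ht => by
        rw [mem_range] at ht
        rw [insertAt_of_le ht.le, insertAt_of_le ht]
    simp only [add_zero, sum_range_succ, hprefix, insertAt_of_le le_rfl, insertAt_self_add_one,
      insertAt_add_one_of_lt (Nat.lt_succ_self i)]
    ring
  | succ m ih =>
    rw [← add_assoc, sum_range_succ, ih, sum_range_succ _ (i + 1 + m),
      insertAt_add_one_of_lt (by omega), insertAt_add_one_of_lt (by omega)]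
    ring

theorem IsStraightChain.insertAt_of_between (h : IsStraightChain f n) {i : ℕ} (hi : i < n) {w : X}
    (hw : dist (f i) (f (i + 1)) = dist (f i) w + dist w (f (i + 1))) :
    IsStraightChain (insertAt f i w) (n + 1) := by
  obtain ⟨m, rfl⟩ : ∃ m, n = i + 1 + m := ⟨n - (i + 1), by omega⟩
  unfold IsStraightChain at h ⊢
  rw [sum_range_insertAt, ← h, hw,
    insertAt_of_le (Nat.zero_le i), insertAt_add_one_of_lt (by omega)]
  ring

end PseudoMetricSpace

theorem SimpleGraph.exists_walk_support_edges {V : Type*} {G : SimpleGraph V} (f : ℕ → V)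
    (n : ℕ) (hadj : ∀ t < n, G.Adj (f t) (f (t + 1))) :
    ∃ p : G.Walk (f 0) (f n), p.support = (List.range (n + 1)).map f ∧
      p.edges = (List.range n).map fun t => s(f t, f (t + 1)) := by
  induction n with
  | zero => exact ⟨.nil, by simp, rfl⟩
  | succ n ih =>
    obtain ⟨p, hs, he⟩ := ih fun t ht => hadj t (by omega)
    refine ⟨p.concat (hadj n n.lt_succ_self), ?_, ?_⟩
    · rw [Walk.support_concat, hs, List.range_succ (n := n + 1), List.map_append]
      rfl
    · rw [Walk.edges_concat, he, List.range_succ, List.map_append, List.concat_eq_append]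
      rfl

section MetricSpace

variable {X : Type*} [MetricSpace X] {f : ℕ → X} {n : ℕ}

theorem mbtw_comm {x y z : X} : MBtw x y z ↔ MBtw z y x := by
  unfold MBtw
  rw [dist_comm x z, dist_comm x y, dist_comm y z, add_comm]

namespace IsStraightChain

theorem le_and_le_of_mbtw (h : IsStraightChain f n) (hf : Set.InjOn f (Set.Iic n)) {i j k : ℕ}
    (hik : i ≤ k) (hkn : k ≤ n) (hjn : j ≤ n) (hb : MBtw (f i) (f j) (f k)) : i ≤ j ∧ j ≤ k := by
  unfold MBtw at hb
  constructor
  · by_contra! hji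
    have := h.dist_add_dist hji.le hik hkn
    have hd : dist (f i) (f j) = 0 := by
      rw [dist_comm (f j)] at this
      linarith [dist_nonneg (x := f i) (y := f j)]
    exact hji.ne' ((hf.eq_iff (hik.trans hkn) hjn).1 (dist_eq_zero.1 hd))
  · by_contra! hkj
    have := h.dist_add_dist hik hkj.le hjn
    have hd : dist (f j) (f k) = 0 := by
      rw [dist_comm (f k)] at this
      linarith [dist_nonneg (x := f j) (y := f k)]
    exact hkj.ne' ((hf.eq_iff hjn hkn).1 (dist_eq_zero.1 hd))

theorem mbtw_iff (h : IsStraightChain f n) (hf : Set.InjOn f (Set.Iic n)) {i j k : ℕ}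
    (hin : i ≤ n) (hjn : j ≤ n) (hkn : k ≤ n) :
    MBtw (f i) (f j) (f k) ↔ (i ≤ j ∧ j ≤ k) ∨ (k ≤ j ∧ j ≤ i) := by
  constructor
  · intro hb
    rcases le_total i k with hik | hki
    · exact Or.inl (h.le_and_le_of_mbtw hf hik hkn hjn hb)
    · exact Or.inr (h.le_and_le_of_mbtw hf hki hin hjn (mbtw_comm.1 hb))
  · rintro (⟨hij, hjk⟩ | ⟨hkj, hji⟩)
    · exact (h.dist_add_dist hij hjk hkn).symm
    · exact mbtw_comm.1 (h.dist_add_dist hkj hji hin).symm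

theorem eq_add_one_of_adj (h : IsStraightChain f n) (hf : Set.InjOn f (Set.Iic n)) {a b : ℕ}
    (hab : a < b) (hbn : b ≤ n) (hadj : (adjGraphM X).Adj (f a) (f b)) : b = a + 1 := by
  by_contra hne
  have hlt : a + 1 < b := by omega
  refine hadj.2 (f (a + 1)) ?_ ?_ (h.dist_add_dist a.le_succ hlt.le hbn).symm
  · exact fun he => a.succ_ne_self ((hf.eq_iff (hlt.le.trans hbn) (hab.le.trans hbn)).1 he)
  · exact fun he => hlt.ne ((hf.eq_iff (hlt.le.trans hbn) hbn).1 he)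

end IsStraightChain

theorem orderedSet_iff_exists_straightChain {Y : Set X} :
    OrderedSet Y ↔ ∃ (n : ℕ) (f : ℕ → X),
      Set.InjOn f (Set.Iic n) ∧ IsStraightChain f n ∧ f '' Set.Iic n = Y := by
  constructor
  · rintro ⟨n, y, hinj, rfl, hsum⟩
    have hclamp : ∀ k (hk : k ≤ n), Fin.clamp k n = ⟨k, Nat.lt_succ_of_le hk⟩ := fun k hk =>
      Fin.ext (min_eq_left hk)
    refine ⟨n, fun k => y (Fin.clamp k n), fun a ha b hb he => ?_, ?_, ?_⟩
    · simpa [hclamp a ha, hclamp b hb] using hinj he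
    · rw [IsStraightChain, hclamp 0 n.zero_le, hclamp n le_rfl, ← Fin.sum_univ_eq_sum_range
        (fun t => dist (y (Fin.clamp t n)) (y (Fin.clamp (t + 1) n)))]
      refine hsum.trans (sum_congr rfl fun i _ => ?_)
      rw [hclamp i i.is_le', hclamp (i + 1) i.isLt]
      rfl
    · ext x
      simp only [Set.mem_image, Set.mem_Iic, Set.mem_range]
      constructor
      · rintro ⟨k, hk, rfl⟩
        exact ⟨_, rfl⟩
      · rintro ⟨j, rfl⟩
        exact ⟨j, j.is_le, by rw [hclamp j j.is_le]⟩
  · rintro ⟨n, f, hf, h, rfl⟩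
    refine ⟨n, fun j => f j, fun a b he => Fin.ext (hf a.is_le b.is_le he), ?_, ?_⟩
    · ext x
      simp only [Set.mem_image, Set.mem_Iic, Set.mem_range]
      constructor
      · rintro ⟨j, rfl⟩
        exact ⟨j, j.is_le, rfl⟩
      · rintro ⟨k, hk, rfl⟩
        exact ⟨⟨k, Nat.lt_succ_of_le hk⟩, rfl⟩
    · simpa [IsStraightChain, Fin.sum_univ_eq_sum_range (fun t => dist (f t) (f (t + 1)))]
        using h

theorem IsStraightChain.adjGraphM_adj_of_maximal (h : IsStraightChain f n)
    (hf : Set.InjOn f (Set.Iic n))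
    (hmax : ∀ Z : Set X, f '' Set.Iic n ⊆ Z → OrderedSet Z → Z = f '' Set.Iic n)
    {i : ℕ} (hi : i < n) : (adjGraphM X).Adj (f i) (f (i + 1)) := by
  refine ⟨fun he => i.succ_ne_self ((hf.eq_iff hi.le hi).1 he).symm, fun w hwi hwi' hw => ?_⟩
  have hwY : w ∉ f '' Set.Iic n := by
    rintro ⟨j, hj, rfl⟩
    obtain ⟨hij, hji⟩ := h.le_and_le_of_mbtw hf i.le_succ hi hj hw
    rcases (show j = i ∨ j = i + 1 by omega) with rfl | rfl
    exacts [hwi rfl, hwi' rfl]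
  have hZ : OrderedSet (insert w (f '' Set.Iic n)) :=
    orderedSet_iff_exists_straightChain.2 ⟨n + 1, insertAt f i w, injOn_insertAt hf hi.le hwY,
      h.insertAt_of_between hi hw, image_insertAt f hi.le w⟩
  exact hwY (hmax _ (Set.subset_insert _ _) hZ ▸ Set.mem_insert w _)

theorem IsStraightChain.isBGeodesic [DecidableEq X] (h : IsStraightChain f n)
    (hf : Set.InjOn f (Set.Iic n)) (p : (adjGraphM X).Walk (f 0) (f n))
    (hs : p.support = (List.range (n + 1)).map f)
    (he : p.edges = (List.range n).map fun t => s(f t, f (t + 1))) : IsBGeodesic p := by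
  have hnd : p.support.Nodup := hs ▸ List.nodup_range.map_on fun a ha b hb =>
    hf (Nat.lt_succ_iff.1 (List.mem_range.1 ha)) (Nat.lt_succ_iff.1 (List.mem_range.1 hb))
  have hmem : ∀ v ∈ p.support, ∃ k ≤ n, f k = v := fun v hv => by
    obtain ⟨k, hk, rfl⟩ := List.mem_map.1 (hs ▸ hv)
    exact ⟨k, Nat.lt_succ_iff.1 (List.mem_range.1 hk), rfl⟩
  have hidx : ∀ k ≤ n, p.support.idxOf (f k) = k := fun k hk => by
    have := hnd.idxOf_getElem k (by simp [hs]; omega)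
    simpa [hs] using this
  refine ⟨SimpleGraph.Walk.IsPath.mk' hnd, ?_, ?_⟩
  · intro a ha b hb hab
    obtain ⟨k, hk, rfl⟩ := hmem a ha
    obtain ⟨l, hl, rfl⟩ := hmem b hb
    rcases lt_or_gt_of_ne (fun hkl : k = l => hab.ne (by rw [hkl])) with hkl | hlk
    · obtain rfl := h.eq_add_one_of_adj hf hkl hl hab
      exact he ▸ List.mem_map.2 ⟨k, List.mem_range.2 (by omega), rfl⟩
    · obtain rfl := h.eq_add_one_of_adj hf hlk hk hab.symm
      exact he ▸ Sym2.eq_swap ▸ List.mem_map.2 ⟨l, List.mem_range.2 (by omega), rfl⟩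
  · intro a ha b hb c hc
    obtain ⟨i, hi, rfl⟩ := hmem a ha
    obtain ⟨j, hj, rfl⟩ := hmem b hb
    obtain ⟨k, hk, rfl⟩ := hmem c hc
    rw [h.mbtw_iff hf hi hj hk, pathBtw, hidx i hi, hidx j hj, hidx k hk]

end MetricSpace

theorem stmt_16_general {X : Type*} [MetricSpace X] [DecidableEq X] (Y : Set X)
    (hY : OrderedSet Y) (hmax : ∀ Z : Set X, Y ⊆ Z → OrderedSet Z → Z = Y) :
    ∃ (x z : X) (p : (adjGraphM X).Walk x z),
      IsBGeodesic p ∧ {v | v ∈ p.support} = Y := by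
  obtain ⟨n, f, hf, h, rfl⟩ := orderedSet_iff_exists_straightChain.1 hY
  obtain ⟨p, hs, he⟩ := SimpleGraph.exists_walk_support_edges f n fun i hi =>
    h.adjGraphM_adj_of_maximal hf hmax hi
  refine ⟨f 0, f n, p, h.isBGeodesic hf p hs he, ?_⟩
  ext x
  simp [hs]

/-- The subgraph of the adjacency graph induced by a maximal ordered set is a geodesic
of the betweenness structure. -/
theorem stmt_16 {X : Type*} [MetricSpace X] [Fintype X] [DecidableEq X] (Y : Set X)
    (hY : OrderedSet Y) (hmax : ∀ Z : Set X, Y ⊆ Z → OrderedSet Z → Z = Y) :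
    ∃ (x z : X) (p : (adjGraphM X).Walk x z),
      IsBGeodesic p ∧ {v | v ∈ p.support} = Y :=
  stmt_16_general Y hY hmax
end

section
/- Let M = (X, d) be a finite metric space. For all x, y, z ∈ X, the relation d(x, z) = d(x, y) + d(y, z) holds if and only if y lies on some x-z geodesic in the betweenness structure of M, where a geodesic is an induced path P in the adjacency graph of M whose set of vertices carries the ordered betweenness structure of P. -/
section Betweenness

variable {X : Type*} [MetricSpace X] {o u v w x y z : X}

theorem mbtw_self_left (x z : X) : MBtw x x z := by simp [MBtw]

theorem mbtw_self_right (x z : X) : MBtw x z z := by simp [MBtw]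

theorem MBtw.dist_eq_sub (h : MBtw o u v) : dist u v = dist o v - dist o u := by
  unfold MBtw at h; linarith

theorem MBtw.dist_le (h : MBtw o u v) : dist o u ≤ dist o v := by
  linarith [h.dist_eq_sub, dist_nonneg (x := u) (y := v)]

theorem MBtw.trans_left (h₁ : MBtw w y z) (h₂ : MBtw w x y) : MBtw w x z := by
  unfold MBtw at *
  linarith [dist_triangle w x z, dist_triangle x y z]

theorem MBtw.trans_right (h₁ : MBtw w x z) (h₂ : MBtw x y z) : MBtw w y z := by
  unfold MBtw at *
  linarith [dist_triangle w y z, dist_triangle w x y]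

theorem MBtw.trans_right_left (h₁ : MBtw w x z) (h₂ : MBtw x y z) : MBtw w x y := by
  unfold MBtw at *
  linarith [dist_triangle w y z, dist_triangle w x y]

theorem MBtw.eq_of_swap_left (h₁ : MBtw x y z) (h₂ : MBtw y x z) : x = y := by
  unfold MBtw at *
  exact dist_eq_zero.1 (by linarith [dist_comm x y])

theorem MBtw.eq_of_swap_right (h₁ : MBtw x y z) (h₂ : MBtw x z y) : y = z := by
  unfold MBtw at *
  exact dist_eq_zero.1 (by linarith [dist_comm y z])

/-- `MBtw o` is a partial order on `X`; `MLt o` is its strict part. -/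
def MLt (o u v : X) : Prop :=
  u ≠ v ∧ MBtw o u v

theorem MLt.dist_lt (h : MLt o u v) : dist o u < dist o v := by
  linarith [h.2.dist_eq_sub, dist_pos.2 h.1]

end Betweenness

theorem List.Pairwise.rel_of_idxOf_lt {α : Type*} [DecidableEq α] {R : α → α → Prop}
    {l : List α} (h : l.Pairwise R) {a b : α} (ha : a ∈ l) (hb : b ∈ l)
    (hab : l.idxOf a < l.idxOf b) : R a b := by
  simpa using List.pairwise_iff_getElem.1 h _ _ (List.idxOf_lt_length_iff.2 ha)
    (List.idxOf_lt_length_iff.2 hb) hab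

section PairwiseMLt

variable {X : Type*} [MetricSpace X] [DecidableEq X] {o a b c : X} {l : List X}

theorem mbtw_of_idxOf_le (hl : l.Pairwise (MLt o)) (ha : a ∈ l) (hb : b ∈ l)
    (hab : l.idxOf a ≤ l.idxOf b) : MBtw o a b := by
  rcases hab.lt_or_eq with hab | hab
  · exact (hl.rel_of_idxOf_lt ha hb hab).2
  · rw [(List.idxOf_inj ha).1 hab]
    exact mbtw_self_right o b

theorem idxOf_le_iff_dist_le (hl : l.Pairwise (MLt o)) (ha : a ∈ l) (hb : b ∈ l) :
    l.idxOf a ≤ l.idxOf b ↔ dist o a ≤ dist o b := by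
  refine ⟨fun hab => ?_, fun hab => ?_⟩
  · exact (mbtw_of_idxOf_le hl ha hb hab).dist_le
  · by_contra! hba
    exact (hl.rel_of_idxOf_lt hb ha hba).dist_lt.not_ge hab

theorem dist_eq_abs_sub_of_pairwise_mlt (hl : l.Pairwise (MLt o)) (ha : a ∈ l) (hb : b ∈ l) :
    dist a b = |dist o a - dist o b| := by
  rcases le_total (l.idxOf a) (l.idxOf b) with hab | hba
  · have h := mbtw_of_idxOf_le hl ha hb hab
    rw [h.dist_eq_sub, abs_sub_comm, abs_of_nonneg (sub_nonneg.2 h.dist_le)]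
  · have h := mbtw_of_idxOf_le hl hb ha hba
    rw [dist_comm, h.dist_eq_sub, abs_of_nonneg (sub_nonneg.2 h.dist_le)]

theorem mbtw_iff_pathBtw (hl : l.Pairwise (MLt o)) (ha : a ∈ l) (hb : b ∈ l) (hc : c ∈ l) :
    MBtw a b c ↔ pathBtw l a b c := by
  rw [pathBtw, idxOf_le_iff_dist_le hl ha hb, idxOf_le_iff_dist_le hl hb hc,
    idxOf_le_iff_dist_le hl hc hb, idxOf_le_iff_dist_le hl hb ha, MBtw,
    dist_eq_abs_sub_of_pairwise_mlt hl ha hb, dist_eq_abs_sub_of_pairwise_mlt hl hb hc,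
    dist_eq_abs_sub_of_pairwise_mlt hl ha hc, ← Real.dist_eq, ← Real.dist_eq, ← Real.dist_eq,
    eq_comm, dist_add_dist_eq_iff, ← mem_segment_iff_wbtw, segment_eq_uIcc, Set.mem_uIcc]

end PairwiseMLt

section Straight

variable {X : Type*} [MetricSpace X] {G : SimpleGraph X} {a c w : X}

def IsStraight (p : G.Walk a c) : Prop :=
  p.support.Pairwise (MLt a) ∧ ∀ u ∈ p.support, MBtw a u c

theorem isStraight_nil (a : X) : IsStraight (.nil : G.Walk a a) :=
  ⟨List.pairwise_singleton _ a, by simpa using mbtw_self_left a a⟩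

theorem isStraight_toWalk (h : G.Adj a c) : IsStraight h.toWalk := by
  refine ⟨?_, ?_⟩ <;> simp [MLt, h.ne, mbtw_self_left, mbtw_self_right]

theorem IsStraight.append {p : G.Walk a w} {q : G.Walk w c} (hp : IsStraight p)
    (hq : IsStraight q) (h : MBtw a w c) : IsStraight (p.append q) := by
  have hq₁ := hq.1
  rw [← q.cons_tail_support, List.pairwise_cons] at hq₁
  have mem_tail {v} (hv : v ∈ q.support.tail) : v ∈ q.support := List.mem_of_mem_tail hv
  rw [IsStraight, SimpleGraph.Walk.support_append, List.pairwise_append]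
  refine ⟨⟨hp.1, hq₁.2.imp_of_mem fun _ hv huv => ⟨huv.1, ?_⟩, fun u hu v hv => ⟨?_, ?_⟩⟩, ?_⟩
  · exact (h.trans_right_left (hq.2 _ (mem_tail hv))).trans_right huv.2
  · rintro rfl
    exact (hq₁.1 u hv).1 ((hp.2 u hu).eq_of_swap_right
      (h.trans_right_left (hq.2 u (mem_tail hv)))).symm
  · exact (h.trans_right_left (hq.2 v (mem_tail hv))).trans_left (hp.2 u hu)
  · intro u hu
    rcases List.mem_append.1 hu with hu | hu
    · exact h.trans_left (hp.2 u hu)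
    · exact h.trans_right (hq.2 u (mem_tail hu))

end Straight

section AdjGraph

variable {X : Type*} [MetricSpace X] {a c w : X}

theorem exists_mbtw_of_not_adj (hac : a ≠ c) (h : ¬ (adjGraphM X).Adj a c) :
    ∃ w, w ≠ a ∧ w ≠ c ∧ MBtw a w c := by
  simpa [adjGraphM, hac, MBtw] using h

theorem ncard_mbtw_lt_left [Finite X] (h : MBtw a w c) (hwc : w ≠ c) :
    {u | MBtw a u w}.ncard < {u | MBtw a u c}.ncard :=
  Set.ncard_lt_ncard <| (Set.ssubset_iff_of_subset fun _ hu => h.trans_left hu).2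
    ⟨c, mbtw_self_right a c, fun hc => hwc (MBtw.eq_of_swap_right hc h).symm⟩

theorem ncard_mbtw_lt_right [Finite X] (h : MBtw a w c) (hwa : w ≠ a) :
    {u | MBtw w u c}.ncard < {u | MBtw a u c}.ncard :=
  Set.ncard_lt_ncard <| (Set.ssubset_iff_of_subset fun _ hu => h.trans_right hu).2
    ⟨a, mbtw_self_left a c, fun ha => hwa (MBtw.eq_of_swap_left ha h)⟩

theorem exists_isStraight_walk [Finite X] (a c : X) :
    ∃ p : (adjGraphM X).Walk a c, IsStraight p := by
  induction hn : {u | MBtw a u c}.ncard using Nat.strong_induction_on generalizing a c with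
  | _ n ih =>
  by_cases hac : a = c
  · subst hac
    exact ⟨.nil, isStraight_nil a⟩
  by_cases hadj : (adjGraphM X).Adj a c
  · exact ⟨hadj.toWalk, isStraight_toWalk hadj⟩
  obtain ⟨w, hwa, hwc, hw⟩ := exists_mbtw_of_not_adj hac hadj
  obtain ⟨p, hp⟩ := ih _ (hn ▸ ncard_mbtw_lt_left hw hwc) a w rfl
  obtain ⟨q, hq⟩ := ih _ (hn ▸ ncard_mbtw_lt_right hw hwa) w c rfl
  exact ⟨p.append q, hp.append hq hw⟩

theorem isBGeodesic_of_pairwise_mlt [DecidableEq X] {x z : X} {p : (adjGraphM X).Walk x z}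
    (hp : p.support.Pairwise (MLt x)) : IsBGeodesic p := by
  refine ⟨(SimpleGraph.Walk.isPath_def p).2 (hp.imp And.left), fun a ha b hb hab => ?_,
    fun a ha b hb c hc => mbtw_iff_pathBtw hp ha hb hc⟩
  wlog hlt : p.support.idxOf a < p.support.idxOf b generalizing a b
  · rcases (not_lt.1 hlt).lt_or_eq with hba | hba
    · rw [Sym2.eq_swap]
      exact this b hb a ha hab.symm hba
    · exact absurd ((List.idxOf_inj hb).1 hba) hab.ne.symm
  have hnd : p.support.Nodup := hp.imp And.left
  have hb_lt := List.idxOf_lt_length_iff.2 hb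
  -- otherwise the vertex right after `a` would lie strictly between `a` and `b`
  have hb_succ : p.support.idxOf b = p.support.idxOf a + 1 := by
    by_contra hne
    have hm : p.support.idxOf a + 1 < p.support.length := by omega
    have hm_idx := hnd.idxOf_getElem _ hm
    have hbtw : MBtw a p.support[p.support.idxOf a + 1] b :=
      (mbtw_iff_pathBtw hp ha (List.getElem_mem hm) hb).2 (.inl ⟨by omega, by omega⟩)
    exact hab.2 _ (fun h => by rw [h] at hm_idx; omega) (fun h => by rw [h] at hm_idx; omega) hbtw
  rw [SimpleGraph.Walk.mk_mem_edges_iff_exists]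
  refine ⟨p.support.idxOf a, by rw [p.length_support] at hb_lt; omega, ?_⟩
  rw [← hb_succ, p.getVert_support_idxOf ha, p.getVert_support_idxOf hb]

end AdjGraph

theorem pathBtw_support {X : Type*} [DecidableEq X] {G : SimpleGraph X} {x y z : X}
    {p : G.Walk x z} (hp : p.IsPath) (hy : y ∈ p.support) : pathBtw p.support x y z := by
  have hx : p.support.idxOf x = 0 := by
    rw [← p.cons_tail_support]
    exact List.idxOf_cons_self
  have hz := hp.support_nodup.idxOf_getElem p.length (by simp)
  rw [p.support_getElem_length] at hz
  have hy_lt := List.idxOf_lt_length_iff.2 hy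
  rw [p.length_support] at hy_lt
  exact .inl ⟨by omega, by omega⟩

/-- Betweenness holds iff the middle point lies on some geodesic of the betweenness
structure joining the outer two. -/
theorem stmt_17 {X : Type*} [MetricSpace X] [Fintype X] [DecidableEq X] (x y z : X) :
    MBtw x y z ↔
      ∃ p : (adjGraphM X).Walk x z, IsBGeodesic p ∧ y ∈ p.support := by
  constructor
  · intro h
    obtain ⟨p, hp⟩ := exists_isStraight_walk x y
    obtain ⟨q, hq⟩ := exists_isStraight_walk y z
    exact ⟨p.append q, isBGeodesic_of_pairwise_mlt (hp.append hq h).1,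
      (p.mem_support_append_iff q).2 (.inl p.end_mem_support)⟩
  · rintro ⟨p, ⟨hpath, -, hbtw⟩, hy⟩
    exact (hbtw x p.start_mem_support y hy z p.end_mem_support).2 (pathBtw_support hpath hy)
end
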